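/- arXiv:2603.26222 — 2 statements merged into one kernel-verified Lean document; each statement's English description precedes it below -/
import Mathlib

section
/- If a right functional R-module X = (X, X', g) satisfies condition (FS), then the ring homomorphism j : K_R(X) → L_R(X) sending x ⊗ φ to the operator θ_{x,φ} : y ↦ x·g(φ⊗y) is injective, and its image is a two-sided ideal of the ring L_R(X) of adjointable operators. -/
/-- A right functional `R`-module `(X, X', g)`: `X` a right `R`-module, `X'` a left
`R`-module (over a possibly non-unital ring `R`), and `g : X' ⊗_ℤ X → R` an
`R`-bimodule map, encoded here as a biadditive map `g : X' → X → R`. -/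
structure FnMod (R X X' : Type) [NonUnitalRing R] [AddCommGroup X] [AddCommGroup X'] where
  sm : X → R → X
  sm' : R → X' → X'
  g : X' → X → R
  sm_add_left : ∀ x y r, sm (x + y) r = sm x r + sm y r
  sm_add_right : ∀ x r s, sm x (r + s) = sm x r + sm x s
  sm_mul : ∀ x r s, sm x (r * s) = sm (sm x r) s
  sm'_add_left : ∀ r φ ψ, sm' r (φ + ψ) = sm' r φ + sm' r ψ
  sm'_add_right : ∀ r s φ, sm' (r + s) φ = sm' r φ + sm' s φ
  sm'_mul : ∀ r s φ, sm' (r * s) φ = sm' r (sm' s φ)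
  g_add_left : ∀ φ ψ x, g (φ + ψ) x = g φ x + g ψ x
  g_add_right : ∀ φ x y, g φ (x + y) = g φ x + g φ y
  g_sm' : ∀ r φ x, g (sm' r φ) x = r * g φ x
  g_sm : ∀ φ x r, g φ (sm x r) = g φ x * r

namespace FnMod
variable {R X X' : Type} [NonUnitalRing R] [AddCommGroup X] [AddCommGroup X']

/-- `f : X → X` is additive and right `R`-linear. -/
def RLinear (M : FnMod R X X') (f : X → X) : Prop :=
  (∀ x y, f (x + y) = f x + f y) ∧ ∀ x r, f (M.sm x r) = M.sm (f x) r

/-- `f : X' → X'` is additive and left `R`-linear. -/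
def RLinear' (M : FnMod R X X') (f : X' → X') : Prop :=
  (∀ φ ψ, f (φ + ψ) = f φ + f ψ) ∧ ∀ r φ, f (M.sm' r φ) = M.sm' r (f φ)

/-- `fs` is an adjoint of `f`: `g(φ ⊗ f x) = g(fs φ ⊗ x)`. -/
def IsAdjoint (M : FnMod R X X') (f : X → X) (fs : X' → X') : Prop :=
  ∀ φ x, M.g φ (f x) = M.g (fs φ) x

/-- `f` is an adjointable endomorphism of the functional module. -/
def Adjointable (M : FnMod R X X') (f : X → X) : Prop :=
  M.RLinear f ∧ ∃ fs, M.RLinear' fs ∧ M.IsAdjoint f fs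

/-- Non-degeneracy of the scalar product. -/
def Nondeg (M : FnMod R X X') : Prop :=
  (∀ x, (∀ φ, M.g φ x = 0) → x = 0) ∧ ∀ φ, (∀ x, M.g φ x = 0) → φ = 0

/-- Condition (FS): finite families of vectors (resp. functionals) admit a compact
operator `Θ₁ = Σⱼ yⱼ ⊗ ψⱼ` (resp. `Θ₂ = Σⱼ zⱼ ⊗ χⱼ`) acting as the identity on them. -/
def FS (M : FnMod R X X') : Prop :=
  ∀ (n : ℕ) (x : Fin n → X) (φ : Fin n → X'),
    ∃ (m₁ : ℕ) (y : Fin m₁ → X) (ψ : Fin m₁ → X') (m₂ : ℕ) (z : Fin m₂ → X) (χ : Fin m₂ → X'),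
      (∀ i, ∑ j, M.sm (y j) (M.g (ψ j) (x i)) = x i) ∧
      (∀ i, ∑ j, M.sm' (M.g (φ i) (z j)) (χ j) = φ i)

/-- The rank-one operator `θ_{x,φ} : y ↦ x · g(φ ⊗ y)`. -/
def theta (M : FnMod R X X') (x : X) (φ : X') : X → X := fun y => M.sm x (M.g φ y)

end FnMod
noncomputable section

open scoped TensorProduct

/-- The subgroup of `A ⊗_ℤ B` generated by the balancing relations
`(a·r) ⊗ b − a ⊗ (r·b)` for a right action `ra` on `A` and left action `lb` on `B`. -/
def BalRel (R A B : Type) [NonUnitalRing R] [AddCommGroup A] [AddCommGroup B]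
    (ra : A → R → A) (lb : R → B → B) : AddSubgroup (TensorProduct ℤ A B) :=
  AddSubgroup.closure {z | ∃ (a : A) (r : R) (b : B), z = (ra a r) ⊗ₜ[ℤ] b - a ⊗ₜ[ℤ] (lb r b)}

/-- The balanced tensor product `A ⊗_R B` over the (possibly non-unital) ring `R`. -/
def TensB (R A B : Type) [NonUnitalRing R] [AddCommGroup A] [AddCommGroup B]
    (ra : A → R → A) (lb : R → B → B) : Type :=
  TensorProduct ℤ A B ⧸ BalRel R A B ra lb

instance TensB.instAddCommGroup (R A B : Type) [NonUnitalRing R] [AddCommGroup A]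
    [AddCommGroup B] (ra : A → R → A) (lb : R → B → B) :
    AddCommGroup (TensB R A B ra lb) := by
  delta TensB; infer_instance

/-- The class of the pure tensor `a ⊗ b` in `A ⊗_R B`. -/
def TensB.mk {R A B : Type} [NonUnitalRing R] [AddCommGroup A] [AddCommGroup B]
    (ra : A → R → A) (lb : R → B → B) (a : A) (b : B) : TensB R A B ra lb :=
  QuotientAddGroup.mk (a ⊗ₜ[ℤ] b)

namespace FnMod
variable {R X X' : Type} [NonUnitalRing R] [AddCommGroup X] [AddCommGroup X']

/-- The abelian group `K_R(X) = X ⊗_R X'` of "compact operators". -/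
def K (M : FnMod R X X') : Type := TensB R X X' M.sm M.sm'

instance (M : FnMod R X X') : AddCommGroup M.K := by delta K; infer_instance

/-- The class of `x ⊗ φ` in `K_R(X)`. -/
def kTen (M : FnMod R X X') (x : X) (φ : X') : M.K := TensB.mk M.sm M.sm' x φ

end FnMod

/-!
An element of `K_R(X)` is a finite sum `c = Σᵢ xᵢ ⊗ φᵢ`. Choosing `Θ₂ = Σⱼ zⱼ ⊗ χⱼ` with
`φᵢ · Θ₂ = φᵢ` and moving scalars across the balanced tensor product gives
`c = Σⱼ j(c)(zⱼ) ⊗ χⱼ`, so `j(c) = 0` forces `c = 0`. For the ideal property, an adjointable `f`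
satisfies `f ∘ θ_{x,φ} = θ_{f x, φ}` and `θ_{x,φ} ∘ f = θ_{x, f* φ}`.
-/

namespace FnMod

variable {R X X' : Type} [NonUnitalRing R] [AddCommGroup X] [AddCommGroup X']
variable (M : FnMod R X X')

lemma sm_zero_left (r : R) : M.sm 0 r = 0 :=
  (AddMonoidHom.mk' (M.sm · r) fun x y => M.sm_add_left x y r).map_zero

lemma sm'_zero_right (r : R) : M.sm' r 0 = 0 :=
  (AddMonoidHom.mk' (M.sm' r) (M.sm'_add_left r)).map_zero

lemma g_zero_left (x : X) : M.g 0 x = 0 :=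
  (AddMonoidHom.mk' (M.g · x) fun φ ψ => M.g_add_left φ ψ x).map_zero

lemma g_zero_right (φ : X') : M.g φ 0 = 0 :=
  (AddMonoidHom.mk' (M.g φ) (M.g_add_right φ)).map_zero

lemma theta_comp_theta (x y : X) (φ ψ : X') :
    M.theta x φ ∘ M.theta y ψ = M.theta x (M.sm' (M.g φ y) ψ) := by
  funext w
  simp only [Function.comp_apply, theta, M.g_sm, M.g_sm', M.sm_mul]

lemma RLinear.comp_theta {M : FnMod R X X'} {f : X → X} (hf : M.RLinear f) (x : X) (φ : X') :
    f ∘ M.theta x φ = M.theta (f x) φ :=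
  funext fun y => hf.2 x (M.g φ y)

lemma IsAdjoint.theta_comp {M : FnMod R X X'} {f : X → X} {fs : X' → X'} (h : M.IsAdjoint f fs)
    (x : X) (φ : X') : M.theta x φ ∘ f = M.theta x (fs φ) :=
  funext fun y => congrArg (M.sm x) (h φ y)

section Adjointable

lemma adjointable_zero : M.Adjointable fun _ => 0 :=
  ⟨⟨fun _ _ => (add_zero 0).symm, fun _ r => (M.sm_zero_left r).symm⟩, fun _ => 0,
    ⟨fun _ _ => (add_zero 0).symm, fun r _ => (M.sm'_zero_right r).symm⟩,
    fun φ x => (M.g_zero_right φ).trans (M.g_zero_left x).symm⟩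

lemma adjointable_theta (x : X) (φ : X') : M.Adjointable (M.theta x φ) := by
  refine ⟨⟨fun y z => ?_, fun y r => ?_⟩, fun ψ => M.sm' (M.g ψ x) φ,
    ⟨fun ψ χ => ?_, fun r ψ => ?_⟩, fun ψ y => ?_⟩
  · simp only [theta, M.g_add_right, M.sm_add_right]
  · simp only [theta, M.g_sm, M.sm_mul]
  · dsimp only; rw [M.g_add_left, M.sm'_add_right]
  · dsimp only; rw [M.g_sm', M.sm'_mul]
  · simp only [theta, M.g_sm, M.g_sm']

variable {M}

lemma Adjointable.add {f h : X → X} (hf : M.Adjointable f) (hh : M.Adjointable h) :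
    M.Adjointable fun y => f y + h y := by
  obtain ⟨⟨f_add, f_sm⟩, fs, ⟨fs_add, fs_sm⟩, f_adj⟩ := hf
  obtain ⟨⟨h_add, h_sm⟩, hs, ⟨hs_add, hs_sm⟩, h_adj⟩ := hh
  refine ⟨⟨fun x y => ?_, fun x r => ?_⟩, fun φ => fs φ + hs φ, ⟨fun φ ψ => ?_, fun r φ => ?_⟩,
    fun φ x => ?_⟩
  all_goals dsimp only
  · rw [f_add, h_add]; abel
  · rw [f_sm, h_sm, M.sm_add_left]
  · rw [fs_add, hs_add]; abel
  · rw [fs_sm, hs_sm, M.sm'_add_left]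
  · rw [M.g_add_right, M.g_add_left, f_adj, h_adj]

lemma adjointable_sum {ι : Type*} (s : Finset ι) {f : ι → X → X}
    (hf : ∀ i ∈ s, M.Adjointable (f i)) : M.Adjointable fun y => ∑ i ∈ s, f i y := by
  classical
  induction s using Finset.induction_on with
  | empty => simpa using M.adjointable_zero
  | insert i s hi ih =>
    simp only [Finset.sum_insert hi]
    exact (hf i (s.mem_insert_self i)).add (ih fun j hj => hf j (Finset.mem_insert_of_mem hj))

end Adjointable

lemma kTen_add_left (x y : X) (φ : X') : M.kTen (x + y) φ = M.kTen x φ + M.kTen y φ :=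
  congrArg (QuotientAddGroup.mk (s := BalRel R X X' M.sm M.sm')) (TensorProduct.add_tmul x y φ)

lemma kTen_add_right (x : X) (φ ψ : X') : M.kTen x (φ + ψ) = M.kTen x φ + M.kTen x ψ :=
  congrArg (QuotientAddGroup.mk (s := BalRel R X X' M.sm M.sm')) (TensorProduct.tmul_add x φ ψ)

lemma kTen_zero_left (φ : X') : M.kTen 0 φ = 0 :=
  (AddMonoidHom.mk' (M.kTen · φ) fun x y => M.kTen_add_left x y φ).map_zero

lemma kTen_sum_left {ι : Type*} (s : Finset ι) (x : ι → X) (φ : X') :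
    M.kTen (∑ i ∈ s, x i) φ = ∑ i ∈ s, M.kTen (x i) φ :=
  map_sum (AddMonoidHom.mk' (M.kTen · φ) fun x y => M.kTen_add_left x y φ) x s

lemma kTen_sum_right {ι : Type*} (s : Finset ι) (x : X) (φ : ι → X') :
    M.kTen x (∑ i ∈ s, φ i) = ∑ i ∈ s, M.kTen x (φ i) :=
  map_sum (AddMonoidHom.mk' (M.kTen x) (M.kTen_add_right x)) φ s

lemma kTen_sm (x : X) (r : R) (φ : X') : M.kTen (M.sm x r) φ = M.kTen x (M.sm' r φ) :=
  (QuotientAddGroup.eq_iff_sub_mem).2 (AddSubgroup.subset_closure ⟨x, r, φ, rfl⟩)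

lemma exists_eq_sum_kTen (c : M.K) :
    ∃ (n : ℕ) (x : Fin n → X) (φ : Fin n → X'), c = ∑ i, M.kTen (x i) (φ i) := by
  obtain ⟨t, rfl⟩ := QuotientAddGroup.mk_surjective (s := BalRel R X X' M.sm M.sm') c
  induction t using TensorProduct.induction_on with
  | zero => exact ⟨0, Fin.elim0, Fin.elim0, rfl⟩
  | tmul x φ => exact ⟨1, fun _ => x, fun _ => φ, (Fin.sum_univ_one fun _ => M.kTen x φ).symm⟩
  | add t s ht hs =>
    obtain ⟨n, x, φ, ht⟩ := ht
    obtain ⟨m, y, ψ, hs⟩ := hs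
    refine ⟨n + m, Fin.append x y, Fin.append φ ψ, ?_⟩
    rw [Fin.sum_univ_add]
    simp only [Fin.append_left, Fin.append_right]
    exact (QuotientAddGroup.mk_add _ t s).trans (congrArg₂ (· + ·) ht hs)

def thetaHom : X →+ X' →+ (X →+ X) :=
  AddMonoidHom.mk'
    (fun x => AddMonoidHom.mk'
      (fun φ => AddMonoidHom.mk' (M.theta x φ) fun y z => by
        simp only [theta, M.g_add_right, M.sm_add_right])
      fun φ ψ => AddMonoidHom.ext fun y =>
        (congrArg (M.sm x) (M.g_add_left φ ψ y)).trans (M.sm_add_right x _ _))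
    fun x y => AddMonoidHom.ext fun φ => AddMonoidHom.ext fun z => M.sm_add_left x y _

/-- The map `j : K_R(X) → End(X)`, `x ⊗ φ ↦ θ_{x,φ}`. -/
def toEnd : M.K →+ (X →+ X) :=
  QuotientAddGroup.lift (BalRel R X X' M.sm M.sm') (TensorProduct.liftAddHom M.thetaHom
    fun n x φ => by rw [map_zsmul, map_zsmul]; rfl) <| by
    refine (AddSubgroup.closure_le _).2 ?_
    rintro _ ⟨x, r, φ, rfl⟩
    rw [SetLike.mem_coe, AddMonoidHom.mem_ker, map_sub, sub_eq_zero]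
    ext y
    exact congrArg (M.sm x) (M.g_sm' r φ y) |>.trans (M.sm_mul x r _) |>.symm

lemma toEnd_kTen (x : X) (φ : X') : ⇑(M.toEnd (M.kTen x φ)) = M.theta x φ := rfl

lemma toEnd_sum_kTen_apply {n : ℕ} (x : Fin n → X) (φ : Fin n → X') (y : X) :
    M.toEnd (∑ i, M.kTen (x i) (φ i)) y = ∑ i, M.theta (x i) (φ i) y := by
  rw [map_sum, AddMonoidHom.finsetSum_apply]
  rfl

lemma sum_kTen_eq_sum_kTen_toEnd {n m : ℕ} (x : Fin n → X) (φ : Fin n → X') (z : Fin m → X)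
    (χ : Fin m → X') (hφ : ∀ i, ∑ j, M.sm' (M.g (φ i) (z j)) (χ j) = φ i) :
    ∑ i, M.kTen (x i) (φ i) = ∑ j, M.kTen (M.toEnd (∑ i, M.kTen (x i) (φ i)) (z j)) (χ j) := by
  calc ∑ i, M.kTen (x i) (φ i)
      = ∑ i, ∑ j, M.kTen (x i) (M.sm' (M.g (φ i) (z j)) (χ j)) := by
        simp only [← M.kTen_sum_right, hφ]
    _ = ∑ j, ∑ i, M.kTen (M.theta (x i) (φ i) (z j)) (χ j) := by
        rw [Finset.sum_comm]
        simp only [theta, M.kTen_sm]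
    _ = ∑ j, M.kTen (M.toEnd (∑ i, M.kTen (x i) (φ i)) (z j)) (χ j) := by
        simp only [M.toEnd_sum_kTen_apply, M.kTen_sum_left]

lemma toEnd_injective (hFS : M.FS) : Function.Injective M.toEnd := by
  refine (injective_iff_map_eq_zero M.toEnd).2 fun c hc => ?_
  obtain ⟨n, x, φ, rfl⟩ := M.exists_eq_sum_kTen c
  obtain ⟨-, -, -, m, z, χ, -, hφ⟩ := hFS n x φ
  rw [M.sum_kTen_eq_sum_kTen_toEnd x φ z χ hφ, hc]
  simp only [AddMonoidHom.zero_apply, M.kTen_zero_left, Finset.sum_const_zero]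

lemma adjointable_toEnd (c : M.K) : M.Adjointable (M.toEnd c) := by
  obtain ⟨n, x, φ, rfl⟩ := M.exists_eq_sum_kTen c
  have h := adjointable_sum Finset.univ fun i _ => M.adjointable_theta (x i) (φ i)
  rwa [← funext (M.toEnd_sum_kTen_apply x φ)] at h

variable {M}

lemma RLinear.exists_toEnd_eq_comp {f : X → X} (hf : M.RLinear f) (c : M.K) :
    ∃ b, ⇑(M.toEnd b) = f ∘ M.toEnd c := by
  obtain ⟨n, x, φ, rfl⟩ := M.exists_eq_sum_kTen c
  refine ⟨∑ i, M.kTen (f (x i)) (φ i), funext fun y => ?_⟩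
  rw [Function.comp_apply, M.toEnd_sum_kTen_apply, M.toEnd_sum_kTen_apply]
  exact ((map_sum (AddMonoidHom.mk' f hf.1) _ _).trans
    (Finset.sum_congr rfl fun i _ => congrFun (hf.comp_theta (x i) (φ i)) y)).symm

lemma IsAdjoint.exists_toEnd_eq_toEnd_comp {f : X → X} {fs : X' → X'} (h : M.IsAdjoint f fs)
    (c : M.K) : ∃ b, ⇑(M.toEnd b) = M.toEnd c ∘ f := by
  obtain ⟨n, x, φ, rfl⟩ := M.exists_eq_sum_kTen c
  refine ⟨∑ i, M.kTen (x i) (fs (φ i)), funext fun y => ?_⟩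
  rw [Function.comp_apply, M.toEnd_sum_kTen_apply, M.toEnd_sum_kTen_apply]
  exact Finset.sum_congr rfl fun i _ => (congrFun (h.theta_comp (x i) (φ i)) y).symm

end FnMod

/-- If `X` satisfies (FS), the ring homomorphism
`j : K_R(X) → L_R(X)`, `x ⊗ φ ↦ θ_{x,φ}`, is injective and its image is a
two-sided ideal of the ring of adjointable operators. -/
theorem stmt4 {R X X' : Type} [NonUnitalRing R] [AddCommGroup X] [AddCommGroup X']
    (M : FnMod R X X') (hFS : M.FS) :
    ∃ j : M.K → (X → X),
      (∀ a b, j (a + b) = fun y => j a y + j b y) ∧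
      (∀ (x : X) (φ : X'), j (M.kTen x φ) = M.theta x φ) ∧
      -- `j` is multiplicative (on generators, w.r.t. the product of `K_R(X)`)
      (∀ (x y : X) (φ ψ : X'),
        j (M.kTen x φ) ∘ j (M.kTen y ψ) = j (M.kTen x (M.sm' (M.g φ y) ψ))) ∧
      -- `j` is injective
      Function.Injective j ∧
      -- the image of `j` lands in the adjointable operators and is a two-sided ideal there
      (∀ a, M.Adjointable (j a)) ∧
      (∀ f, M.Adjointable f → ∀ a,
        (∃ b, j b = f ∘ j a) ∧ ∃ b, j b = j a ∘ f) :=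
  ⟨fun c => M.toEnd c,
    fun a b => congrArg DFunLike.coe (map_add M.toEnd a b),
    M.toEnd_kTen,
    M.theta_comp_theta,
    DFunLike.coe_injective.comp (M.toEnd_injective hFS),
    M.adjointable_toEnd,
    fun _ ⟨hf, _, _, hfs⟩ c => ⟨hf.exists_toEnd_eq_comp c, hfs.exists_toEnd_eq_toEnd_comp c⟩⟩
end
end

section
/- Let M be a finitely generated projective right R-module over a ring R with local units. Then there exist n, an idempotent e ∈ R, and a right R-module N such that M ⊕ N ≅ (eR)ⁿ as right R-modules, and consequently there is a functional homomorphism from the functional module (M, Hom_R(M,R), ev) to Rⁿ. -/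
/-! If `g₁, …, gₙ` generate `M` and `e` is an idempotent local unit for the coefficients of
expressions `gᵢ = Σⱼ aᵢⱼ rᵢⱼ` (which exist since `M` is unitary), then `gᵢ e = gᵢ`, so
`x ↦ Σ gᵢ xᵢ` maps the unitary module `(eR)ⁿ` onto `M`. Projectivity gives a module section `h`,
whence `M ⊕ ((eR)ⁿ ∩ ker) ≅ (eR)ⁿ` via `(m, x) ↦ h m + x`; and `U = h`, `V φ = (φ gᵢ)ᵢ` is a
functional homomorphism because `Σ φ(gᵢ) h(m)ᵢ = φ(Σ gᵢ h(m)ᵢ) = φ m`. -/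

def HasLocalUnits (R : Type) [NonUnitalRing R] : Prop :=
  ∀ s : Finset R, ∃ e : R, e * e = e ∧ ∀ r ∈ s, e * r = r ∧ r * e = r

/-- A right module structure on an abelian group over a possibly non-unital ring. -/
structure RModS (R M : Type) [NonUnitalRing R] [AddCommGroup M] where
  sm : M → R → M
  sm_add_left : ∀ m n r, sm (m + n) r = sm m r + sm n r
  sm_add_right : ∀ m r s, sm m (r + s) = sm m r + sm m s
  sm_mul : ∀ m r s, sm m (r * s) = sm (sm m r) s

/-- A unitary (non-degenerate) module: `M·R = M`. -/
def RModS.Unitary {R M : Type} [NonUnitalRing R] [AddCommGroup M] (S : RModS R M) : Prop :=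
  ∀ m : M, ∃ (n : ℕ) (a : Fin n → M) (r : Fin n → R), m = ∑ i, S.sm (a i) (r i)

/-- Homomorphism of right `R`-modules. -/
def RModS.Lin {R M N : Type} [NonUnitalRing R] [AddCommGroup M] [AddCommGroup N]
    (S : RModS R M) (T : RModS R N) (f : M → N) : Prop :=
  (∀ m n, f (m + n) = f m + f n) ∧ ∀ m r, f (S.sm m r) = T.sm (f m) r

/-- Finitely generated module. -/
def RModS.FG {R M : Type} [NonUnitalRing R] [AddCommGroup M] (S : RModS R M) : Prop :=
  ∃ (n : ℕ) (gen : Fin n → M), ∀ m : M, ∃ c : Fin n → R, m = ∑ i, S.sm (gen i) (c i)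

/-- Projective module: lifting property in the category of unitary right `R`-modules. -/
def RModS.Projective {R M : Type} [NonUnitalRing R] [AddCommGroup M] (S : RModS R M) : Prop :=
  ∀ (P Q : Type) (iP : AddCommGroup P) (iQ : AddCommGroup Q)
    (SP : @RModS R P _ iP) (SQ : @RModS R Q _ iQ),
    SP.Unitary → SQ.Unitary →
    ∀ p : P → Q, @RModS.Lin R P Q _ iP iQ SP SQ p → Function.Surjective p →
    ∀ f : M → Q, @RModS.Lin R M Q _ _ iQ S SQ f →
    ∃ h : M → P, @RModS.Lin R M P _ _ iP S SP h ∧ p ∘ h = f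

/-- The dual module `M* = Hom_R(M, R)`. -/
def RModS.Dual {R M : Type} [NonUnitalRing R] [AddCommGroup M] (S : RModS R M) : Type :=
  {φ : M → R // (∀ m n, φ (m + n) = φ m + φ n) ∧ ∀ m r, φ (S.sm m r) = φ m * r}

theorem HasLocalUnits.exists_idempotent_forall {R : Type} [NonUnitalRing R] (hR : HasLocalUnits R)
    {ι : Type} [Fintype ι] (f : ι → R) :
    ∃ e : R, e * e = e ∧ ∀ i, e * f i = f i ∧ f i * e = f i := by
  classical
  obtain ⟨e, he, hunit⟩ := hR (Finset.univ.image f)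
  exact ⟨e, he, fun i => hunit (f i) (Finset.mem_image_of_mem f (Finset.mem_univ i))⟩

/-- `(eR)ⁿ`, as `{x | e xᵢ = xᵢ}`; the two agree when `e` is idempotent. -/
def rightIdealPi {R : Type} [NonUnitalRing R] (e : R) (n : ℕ) : AddSubgroup (Fin n → R) where
  carrier := {x | ∀ i, e * x i = x i}
  add_mem' hx hy i := by simp only [Pi.add_apply, mul_add, hx i, hy i]
  zero_mem' i := mul_zero e
  neg_mem' hx i := by simp only [Pi.neg_apply, mul_neg, hx i]

namespace RModS

variable {R M : Type} [NonUnitalRing R] [AddCommGroup M] (S : RModS R M)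

def smHom (r : R) : M →+ M :=
  AddMonoidHom.mk' (fun m => S.sm m r) (fun a b => S.sm_add_left a b r)

theorem zero_sm (r : R) : S.sm 0 r = 0 := map_zero (S.smHom r)

theorem sum_sm {ι : Type} (t : Finset ι) (f : ι → M) (r : R) :
    S.sm (∑ i ∈ t, f i) r = ∑ i ∈ t, S.sm (f i) r :=
  map_sum (S.smHom r) f t

theorem sm_eq_self_of_forall_mul_eq {ι : Type} [Fintype ι] {m : M} {a : ι → M} {r : ι → R}
    (hm : m = ∑ i, S.sm (a i) (r i)) {e : R} (he : ∀ i, r i * e = r i) : S.sm m e = m := by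
  conv_rhs => rw [hm]
  rw [hm, sum_sm]
  exact Finset.sum_congr rfl fun i _ => by rw [← S.sm_mul, he]

theorem exists_idempotent_forall_sm_eq (hR : HasLocalUnits R) (hU : S.Unitary) {n : ℕ}
    (g : Fin n → M) : ∃ e : R, e * e = e ∧ ∀ i, S.sm (g i) e = g i := by
  choose k a r hgr using fun i => hU (g i)
  obtain ⟨e, he, hunit⟩ := hR.exists_idempotent_forall fun p : Σ i, Fin (k i) => r p.1 p.2
  exact ⟨e, he, fun i => S.sm_eq_self_of_forall_mul_eq (hgr i) fun j => (hunit ⟨i, j⟩).2⟩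

variable (R) in
def pi (n : ℕ) : RModS R (Fin n → R) where
  sm x r i := x i * r
  sm_add_left x y r := funext fun i => add_mul (x i) (y i) r
  sm_add_right x r s := funext fun i => mul_add (x i) r s
  sm_mul x r s := funext fun i => (mul_assoc (x i) r s).symm

def restrict (K : AddSubgroup M) (hK : ∀ x ∈ K, ∀ r, S.sm x r ∈ K) : RModS R K where
  sm x r := ⟨S.sm x r, hK x x.2 r⟩
  sm_add_left x y r := Subtype.ext (S.sm_add_left x y r)
  sm_add_right x r s := Subtype.ext (S.sm_add_right x r s)
  sm_mul x r s := Subtype.ext (S.sm_mul x r s)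

theorem pi_sm_mem_rightIdealPi {n : ℕ} {e : R} :
    ∀ x ∈ rightIdealPi e n, ∀ r, (pi R n).sm x r ∈ rightIdealPi e n :=
  fun x hx r i => by rw [pi, ← mul_assoc, hx i]

theorem unitary_restrict_pi (hR : HasLocalUnits R) {n : ℕ} (K : AddSubgroup (Fin n → R))
    (hK : ∀ x ∈ K, ∀ r, (pi R n).sm x r ∈ K) : ((pi R n).restrict K hK).Unitary := by
  intro x
  obtain ⟨f, -, hf⟩ := hR.exists_idempotent_forall x.1
  refine ⟨1, fun _ => x, fun _ => f, ?_⟩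
  rw [Fin.sum_univ_one]
  exact Subtype.ext (funext fun i => (hf i).2.symm)

def linComb {n : ℕ} (g : Fin n → M) : (Fin n → R) →+ M :=
  AddMonoidHom.mk' (fun x => ∑ i, S.sm (g i) (x i)) fun x y => by
    rw [← Finset.sum_add_distrib]
    exact Finset.sum_congr rfl fun i _ => S.sm_add_right _ _ _

theorem linComb_apply {n : ℕ} (g : Fin n → M) (x : Fin n → R) :
    S.linComb g x = ∑ i, S.sm (g i) (x i) := rfl

theorem linComb_pi_sm {n : ℕ} (g : Fin n → M) (x : Fin n → R) (r : R) :
    S.linComb g ((pi R n).sm x r) = S.sm (S.linComb g x) r := by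
  rw [linComb_apply, linComb_apply, sum_sm]
  exact Finset.sum_congr rfl fun i _ => S.sm_mul _ _ _

theorem exists_mem_rightIdealPi_linComb_eq {n : ℕ} {g : Fin n → M}
    (hg : ∀ m, ∃ c : Fin n → R, m = ∑ i, S.sm (g i) (c i)) {e : R} (he : e * e = e)
    (hge : ∀ i, S.sm (g i) e = g i) (m : M) :
    ∃ x ∈ rightIdealPi e n, S.linComb g x = m := by
  obtain ⟨c, hc⟩ := hg m
  refine ⟨fun i => e * c i, fun i => by rw [← mul_assoc, he], ?_⟩
  rw [linComb_apply, hc]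
  exact Finset.sum_congr rfl fun i _ => by rw [S.sm_mul, hge]

theorem exists_retract_rightIdealPi (hR : HasLocalUnits R) (hU : S.Unitary) (hFG : S.FG)
    (hP : S.Projective) :
    ∃ (n : ℕ) (e : R) (g : Fin n → M) (h : M → Fin n → R), e * e = e ∧
      (∀ m, h m ∈ rightIdealPi e n) ∧ S.Lin (pi R n) h ∧ ∀ m, S.linComb g (h m) = m := by
  obtain ⟨n, g, hg⟩ := hFG
  obtain ⟨e, he, hge⟩ := S.exists_idempotent_forall_sm_eq hR hU g
  let P := (pi R n).restrict (rightIdealPi e n) pi_sm_mem_rightIdealPi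
  have hπ : P.Lin S fun x => S.linComb g x :=
    ⟨fun x y => map_add _ _ _, fun x r => S.linComb_pi_sm g x r⟩
  have hπ_surj : Function.Surjective fun x : rightIdealPi e n => S.linComb g x := fun m => by
    obtain ⟨x, hx, rfl⟩ := S.exists_mem_rightIdealPi_linComb_eq hg he hge m
    exact ⟨⟨x, hx⟩, rfl⟩
  obtain ⟨h, hh, hπh⟩ := hP _ M inferInstance inferInstance P S
    (unitary_restrict_pi hR _ _) hU _ hπ hπ_surj id ⟨fun _ _ => rfl, fun _ _ => rfl⟩
  exact ⟨n, e, g, fun m => h m, he, fun m => (h m).2,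
    ⟨fun m m' => congrArg Subtype.val (hh.1 m m'), fun m r => congrArg Subtype.val (hh.2 m r)⟩,
    congrFun hπh⟩

theorem pi_sm_mem_ker_linComb {n : ℕ} (g : Fin n → M) :
    ∀ x ∈ (S.linComb g).ker, ∀ r, (pi R n).sm x r ∈ (S.linComb g).ker := fun x hx r => by
  rw [AddMonoidHom.mem_ker] at hx ⊢
  rw [linComb_pi_sm, hx, zero_sm]

theorem exists_prod_equiv_rightIdealPi {n : ℕ} {e : R} (g : Fin n → M) (h : M → Fin n → R)
    (hh_mem : ∀ m, h m ∈ rightIdealPi e n) (hh : S.Lin (pi R n) h)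
    (hgh : ∀ m, S.linComb g (h m) = m) :
    ∃ (N : Type) (iN : AddCommGroup N) (SN : @RModS R N _ iN) (Φ : M × N → (Fin n → R)),
      (∀ p i, e * Φ p i = Φ p i) ∧
      (∀ p q, Φ (p + q) = Φ p + Φ q) ∧
      (∀ (m : M) (x : N) (r : R), Φ (S.sm m r, SN.sm x r) = fun i => Φ (m, x) i * r) ∧
      Function.Injective Φ ∧
      (∀ x : Fin n → R, (∀ i, e * x i = x i) → ∃ p, Φ p = x) := by
  let K := rightIdealPi e n ⊓ (S.linComb g).ker
  have hK : ∀ x ∈ K, ∀ r, (pi R n).sm x r ∈ K := fun x hx r =>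
    ⟨pi_sm_mem_rightIdealPi x hx.1 r, S.pi_sm_mem_ker_linComb g x hx.2 r⟩
  have hgΦ : ∀ p : M × K, S.linComb g (h p.1 + p.2) = p.1 := fun p => by
    rw [map_add, hgh, AddMonoidHom.mem_ker.mp (AddSubgroup.mem_inf.mp p.2.2).2, add_zero]
  refine ⟨K, inferInstance, (pi R n).restrict K hK, fun p => h p.1 + p.2, ?_, ?_, ?_, ?_, ?_⟩
  · intro p i
    simp only [Pi.add_apply, mul_add, hh_mem p.1 i, (AddSubgroup.mem_inf.mp p.2.2).1 i]
  · intro p q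
    simp only [Prod.fst_add, Prod.snd_add, hh.1, AddSubgroup.coe_add]
    abel
  · intro m x r
    funext i
    simp only [hh.2, Pi.add_apply]
    exact (add_mul _ _ _).symm
  · intro p q hpq
    replace hpq : h p.1 + p.2 = h q.1 + q.2 := hpq
    have h1 : p.1 = q.1 := by rw [← hgΦ p, ← hgΦ q, hpq]
    refine Prod.ext h1 (Subtype.ext ?_)
    rw [h1] at hpq
    exact add_left_cancel hpq
  · intro x hx
    have hmem : x - h (S.linComb g x) ∈ K := AddSubgroup.mem_inf.mpr
      ⟨(rightIdealPi e n).sub_mem hx (hh_mem _),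
        by rw [AddMonoidHom.mem_ker, map_sub, hgh, sub_self]⟩
    exact ⟨(S.linComb g x, ⟨_, hmem⟩), add_sub_cancel _ _⟩

theorem exists_functionalHom {n : ℕ} (g : Fin n → M) (h : M → Fin n → R)
    (hgh : ∀ m, S.linComb g (h m) = m) :
    ∃ V : S.Dual → (Fin n → R),
      (∀ φ ψ χ : S.Dual, (∀ m, χ.1 m = φ.1 m + ψ.1 m) → V χ = V φ + V ψ) ∧
      (∀ (r : R) (φ ψ : S.Dual), (∀ m, ψ.1 m = r * φ.1 m) → V ψ = fun i => r * V φ i) ∧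
      (∀ (φ : S.Dual) (m : M), ∑ i, V φ i * h m i = φ.1 m) := by
  refine ⟨fun φ i => φ.1 (g i), fun φ ψ χ hχ => funext fun i => hχ (g i),
    fun r φ ψ hψ => funext fun i => hψ (g i), fun φ m => ?_⟩
  calc ∑ i, φ.1 (g i) * h m i
      = ∑ i, φ.1 (S.sm (g i) (h m i)) := Finset.sum_congr rfl fun i _ => (φ.2.2 _ _).symm
    _ = φ.1 (S.linComb g (h m)) := (map_sum (AddMonoidHom.mk' φ.1 φ.2.1) _ _).symm
    _ = φ.1 m := by rw [hgh]

end RModS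

/-- Over a ring with local units, a finitely generated projective
unitary right module `M` is a direct summand of some `(eR)ⁿ` (`e` idempotent), and
consequently the functional module `(M, M*, ev)` admits a functional homomorphism
to `Rⁿ`. -/
theorem stmt11 (R M : Type) [NonUnitalRing R] [AddCommGroup M] (S : RModS R M)
    (hR : HasLocalUnits R) (hU : S.Unitary) (hFG : S.FG) (hP : S.Projective) :
    (∃ (n : ℕ) (e : R), e * e = e ∧
      ∃ (N : Type) (iN : AddCommGroup N) (SN : @RModS R N _ iN)
        (Φ : M × N → (Fin n → R)),
        -- `Φ` is an isomorphism of right `R`-modules from `M ⊕ N` onto `(eR)ⁿ`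
        (∀ p i, e * Φ p i = Φ p i) ∧
        (∀ p q, Φ (p + q) = Φ p + Φ q) ∧
        (∀ (m : M) (x : N) (r : R),
          Φ (S.sm m r, SN.sm x r) = fun i => Φ (m, x) i * r) ∧
        Function.Injective Φ ∧
        (∀ x : Fin n → R, (∀ i, e * x i = x i) → ∃ p, Φ p = x)) ∧
    -- consequently: a functional homomorphism `(M, M*, ev) → Rⁿ`
    (∃ (n : ℕ) (U : M → (Fin n → R)) (V : S.Dual → (Fin n → R)),
      (∀ m m', U (m + m') = U m + U m') ∧
      (∀ m r, U (S.sm m r) = fun i => U m i * r) ∧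
      (∀ φ ψ χ : S.Dual, (∀ m, χ.1 m = φ.1 m + ψ.1 m) → V χ = V φ + V ψ) ∧
      (∀ (r : R) (φ ψ : S.Dual), (∀ m, ψ.1 m = r * φ.1 m) → V ψ = fun i => r * V φ i) ∧
      (∀ (φ : S.Dual) (m : M), ∑ i, V φ i * U m i = φ.1 m)) := by
  obtain ⟨n, e, g, h, he, hh_mem, hh, hgh⟩ := S.exists_retract_rightIdealPi hR hU hFG hP
  obtain ⟨V, hV⟩ := S.exists_functionalHom g h hgh
  exact ⟨⟨n, e, he, S.exists_prod_equiv_rightIdealPi g h hh_mem hh hgh⟩,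
    ⟨n, h, V, hh.1, hh.2, hV⟩⟩
end
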